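/- arXiv:2605.20898 — 4 statements merged into one kernel-verified Lean document; each statement's English description precedes it below -/
import Mathlib

section
/- Let g : ℝ^{d_x} × ℝ^{d_y} → ℝ be differentiable with g(x,·) μ-strongly convex for each x, with unique minimizer y*(x), and suppose ∇g*(x) = ∇_x g(x, y*(x)) where g*(x) = min_y g(x,y). If y ↦ ∇_x g(x,y) is L_{gx}-Lipschitz uniformly in x, then for every (x,z), ‖∇_x g(x,z) − ∇g*(x)‖ ≤ (L_{gx}/μ)‖∇_y g(x,z)‖. -/
open scoped RealInnerProductSpace

/-- Bilevel `D_z` deviation bound: if `g(x,·)` is `μ`-strongly convex with minimizer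
`y*(x)`, `∇g*(x) = ∇_x g(x, y*(x))`, and `y ↦ ∇_x g(x,y)` is `L_{gx}`-Lipschitz
uniformly in `x`, then `‖∇_x g(x,z) − ∇g*(x)‖ ≤ (L_{gx}/μ)‖∇_y g(x,z)‖`. -/
theorem bilevel_Dz_bound
    {X Y : Type*} [NormedAddCommGroup X] [InnerProductSpace ℝ X]
    [NormedAddCommGroup Y] [InnerProductSpace ℝ Y]
    (g : X → Y → ℝ) (Gxg : X → Y → X) (Gyg : X → Y → Y)
    (gstar : X → ℝ) (gradgstar : X → X) (ystar : X → Y)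
    (μ Lgx : ℝ) (hμ : 0 < μ)
    -- μ-strong convexity of g(x,·)
    (hsc : ∀ (x : X) (u v : Y),
      g x v ≥ g x u + ⟪Gyg x u, v - u⟫ + μ / 2 * ‖v - u‖ ^ 2)
    -- ystar x is the unique minimizer: value function and first-order condition
    (hmin : ∀ (x : X) (y : Y), g x (ystar x) ≤ g x y)
    (hgstar : ∀ x : X, gstar x = g x (ystar x))
    (hcrit : ∀ x : X, Gyg x (ystar x) = 0)
    -- envelope gradient identity
    (henv : ∀ x : X, gradgstar x = Gxg x (ystar x))
    -- y ↦ ∇_x g(x,y) is L_{gx}-Lipschitz uniformly in x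
    (hLip : ∀ (x : X) (u v : Y), ‖Gxg x u - Gxg x v‖ ≤ Lgx * ‖u - v‖) :
    ∀ (x : X) (z : Y), ‖Gxg x z - gradgstar x‖ ≤ Lgx / μ * ‖Gyg x z‖ := by
  intro x z
  set y := ystar x
  -- strong convexity both ways, added
  have h1 := hsc x z y
  have h2 := hsc x y z
  rw [hcrit x] at h2
  simp only [inner_zero_left] at h2
  have hnorm : ‖z - y‖ = ‖y - z‖ := by rw [← norm_neg]; congr 1; abel
  have hkey : μ * ‖z - y‖ ^ 2 ≤ ⟪Gyg x z, z - y⟫ := by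
    have : g x y + g x z ≥ g x z + ⟪Gyg x z, y - z⟫ + μ / 2 * ‖y - z‖ ^ 2
        + (g x y + μ / 2 * ‖z - y‖ ^ 2) := by linarith
    have hin : ⟪Gyg x z, y - z⟫ = -⟪Gyg x z, z - y⟫ := by
      rw [← inner_neg_right]; congr 1; abel
    have hn2 : ‖z - y‖ ^ 2 = ‖y - z‖ ^ 2 := by rw [hnorm]
    rw [hin] at this
    nlinarith [hn2]
  have hdist : μ * ‖z - y‖ ≤ ‖Gyg x z‖ := by
    rcases eq_or_lt_of_le (norm_nonneg (z - y)) with h0 | h0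
    · rw [← h0]; simp [norm_nonneg]
    · have hc : ⟪Gyg x z, z - y⟫ ≤ ‖Gyg x z‖ * ‖z - y‖ := real_inner_le_norm _ _
      have := hkey.trans hc
      rw [pow_two, ← mul_assoc] at this
      exact le_of_mul_le_mul_right this h0
  have hL : ‖Gxg x z - gradgstar x‖ ≤ Lgx * ‖z - y‖ := by
    rw [henv x]; exact hLip x z y
  rcases lt_or_ge Lgx 0 with hneg | hpos
  · have hz : ‖z - y‖ = 0 := by
      rcases eq_or_lt_of_le (norm_nonneg (z - y)) with h0 | h0
      · exact h0.symm
      · have : Lgx * ‖z - y‖ < 0 := mul_neg_of_neg_of_pos hneg h0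
        nlinarith [norm_nonneg (Gxg x z - gradgstar x)]
    have hzy : z = y := by rw [← sub_eq_zero]; exact norm_eq_zero.mp hz
    have hGy : Gyg x z = 0 := by rw [hzy]; exact hcrit x
    have hGx : Gxg x z - gradgstar x = 0 := by rw [henv x, hzy, sub_self]
    rw [hGx, hGy]
    simp
  · calc ‖Gxg x z - gradgstar x‖ ≤ Lgx * ‖z - y‖ := hL
      _ ≤ Lgx * (‖Gyg x z‖ / μ) := by
          apply mul_le_mul_of_nonneg_left _ hpos
          rw [le_div_iff₀ hμ]; linarith [hdist]
      _ = Lgx / μ * ‖Gyg x z‖ := by ring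
end

section
/- Let f be differentiable with f(x,·) μ-strongly concave and maximizer y*(x), and assume ∇_x f(x,·) is L_{xy}-Lipschitz in y. Define F(x) := max_y f(x,y), assume ∇F(x) = ∇_x f(x,y*(x)), and consider the flow ẋ = −∇_x f(x,y), ẏ = γ∇_y f(x,y). Define W(x,y) := F(x) + (1/2)(F(x) − f(x,y)). If γ ≥ (5/4)(L_{xy}/μ)², then along any solution, d/dt W(x(t),y(t)) ≤ −(1/2)‖∇F(x(t))‖². -/
open scoped RealInnerProductSpace

/-- Minimax Lyapunov descent (Proposition 4.1): along the coupled flow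
`ẋ = −∇_x f(x,y)`, `ẏ = γ∇_y f(x,y)`, with `f(x,·)` `μ`-strongly concave,
`∇_x f` `L_{xy}`-Lipschitz in `y`, `F(x) = max_y f(x,y)`,
`∇F(x) = ∇_x f(x,y*(x))`, and `W(x,y) = F(x) + (1/2)(F(x) − f(x,y))`: if
`γ ≥ (5/4)(L_{xy}/μ)²`, then `d/dt W(x(t),y(t)) ≤ −(1/2)‖∇F(x(t))‖²`. -/
theorem minimax_lyapunov_descent
    {X Y : Type*} [NormedAddCommGroup X] [InnerProductSpace ℝ X] [CompleteSpace X]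
    [NormedAddCommGroup Y] [InnerProductSpace ℝ Y]
    (f : X → Y → ℝ) (Gxf : X → Y → X) (Gyf : X → Y → Y)
    (F : X → ℝ) (gradF : X → X) (ystar : X → Y)
    (μ Lxy γ : ℝ) (hμ : 0 < μ)
    -- μ-strong concavity of f(x,·)
    (hconc : ∀ (x : X) (y y' : Y),
      f x y' ≤ f x y + ⟪Gyf x y, y' - y⟫ - μ / 2 * ‖y' - y‖ ^ 2)
    -- ∇_x f is L_{xy}-Lipschitz in y
    (hLip : ∀ (x : X) (y y' : Y), ‖Gxf x y - Gxf x y'‖ ≤ Lxy * ‖y - y'‖)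
    -- y*(x) maximizes f(x,·)
    (hystar : ∀ x : X, Gyf x (ystar x) = 0)
    (hF : ∀ x : X, F x = f x (ystar x))
    (hgradF : ∀ x : X, HasGradientAt F (gradF x) x)
    (hgradF_eq : ∀ x : X, gradF x = Gxf x (ystar x))
    -- the coupled flow
    (xt : ℝ → X) (yt : ℝ → Y)
    (hxd : ∀ t : ℝ, HasDerivAt xt (-(Gxf (xt t) (yt t))) t)
    (hyd : ∀ t : ℝ, HasDerivAt yt (γ • Gyf (xt t) (yt t)) t)
    -- chain rule for f along the flow
    (hfchain : ∀ t : ℝ, HasDerivAt (fun s => f (xt s) (yt s))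
      (⟪Gxf (xt t) (yt t), -(Gxf (xt t) (yt t))⟫
        + ⟪Gyf (xt t) (yt t), γ • Gyf (xt t) (yt t)⟫) t)
    (hγ : γ ≥ 5 / 4 * (Lxy / μ) ^ 2) :
    ∀ t : ℝ,
      deriv (fun s => F (xt s) + 1 / 2 * (F (xt s) - f (xt s) (yt s))) t
        ≤ -(1 / 2) * ‖gradF (xt t)‖ ^ 2 := by
  intro t
  set x := xt t with hx
  set y := yt t with hy
  set A := gradF x with hA
  set B := Gxf x y with hB
  set r := Gyf x y with hr
  -- derivative of F ∘ xt
  have hdF : HasDerivAt (fun s => F (xt s)) (⟪A, -B⟫) t := by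
    have h := ((hgradF x).hasFDerivAt.comp_hasDerivAt t (hxd t))
    simpa [InnerProductSpace.toDual_apply_apply, Function.comp_def] using h
  have hW : HasDerivAt (fun s => F (xt s) + 1 / 2 * (F (xt s) - f (xt s) (yt s)))
      (⟪A, -B⟫ + 1 / 2 * (⟪A, -B⟫ - (⟪B, -B⟫ + ⟪r, γ • r⟫))) t :=
    hdF.add (((hdF.sub (hfchain t)).const_mul (1 / 2)))
  rw [hW.deriv]
  -- strong concavity ⇒ μ ‖ystar x - y‖ ≤ ‖r‖
  have h1 := hconc x y (ystar x)
  have h2 := hconc x (ystar x) y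
  rw [hystar x] at h2
  simp only [inner_zero_left] at h2
  have hnn : μ * ‖ystar x - y‖ ^ 2 ≤ ⟪r, ystar x - y⟫ := by
    have : ‖y - ystar x‖ = ‖ystar x - y‖ := norm_sub_rev _ _
    rw [this] at h2
    linarith
  have hcs : ⟪r, ystar x - y⟫ ≤ ‖r‖ * ‖ystar x - y‖ :=
    real_inner_le_norm r (ystar x - y)
  have hmu : μ * ‖ystar x - y‖ ≤ ‖r‖ := by
    rcases eq_or_lt_of_le (norm_nonneg (ystar x - y)) with h0 | h0
    · rw [← h0]; simpa using norm_nonneg r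
    · have := hnn.trans hcs
      nlinarith
  -- deviation bound (squared)
  have hD : ‖B - A‖ ≤ Lxy * ‖y - ystar x‖ := by
    rw [hA, hgradF_eq x]
    exact hLip x y (ystar x)
  have hDsq : ‖B - A‖ ^ 2 ≤ (Lxy / μ) ^ 2 * ‖r‖ ^ 2 := by
    have hrev : ‖y - ystar x‖ = ‖ystar x - y‖ := norm_sub_rev _ _
    rw [hrev] at hD
    rcases eq_or_lt_of_le (norm_nonneg (ystar x - y)) with h0 | h0
    · have : ‖B - A‖ ≤ 0 := by rw [← h0] at hD; simpa using hD
      have hz : ‖B - A‖ = 0 := le_antisymm this (norm_nonneg _)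
      rw [hz]
      simpa using mul_nonneg (sq_nonneg (Lxy / μ)) (sq_nonneg ‖r‖)
    · have hLxy : 0 ≤ Lxy := by
        by_contra hneg
        push_neg at hneg
        have : Lxy * ‖ystar x - y‖ < 0 := mul_neg_of_neg_of_pos hneg h0
        linarith [norm_nonneg (B - A), hD.trans_lt this]
      have h1' : ‖ystar x - y‖ ≤ ‖r‖ / μ := by
        rw [le_div_iff₀ hμ]
        linarith [hmu]
      have h2' : ‖B - A‖ ≤ (Lxy / μ) * ‖r‖ := by
        calc ‖B - A‖ ≤ Lxy * ‖ystar x - y‖ := hD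
        _ ≤ Lxy * (‖r‖ / μ) := by
            exact mul_le_mul_of_nonneg_left h1' hLxy
        _ = (Lxy / μ) * ‖r‖ := by ring
      have hrhs : 0 ≤ (Lxy / μ) * ‖r‖ := le_trans (norm_nonneg _) h2'
      nlinarith [norm_nonneg (B - A)]
  -- expand inner products
  have e1 : ⟪A, -B⟫ = -(⟪A, A⟫ + ⟪A, B - A⟫) := by
    rw [inner_neg_right, inner_sub_right]; ring
  have e2 : ⟪B, -B⟫ = -(⟪A, A⟫ + 2 * ⟪A, B - A⟫ + ⟪B - A, B - A⟫) := by
    simp only [inner_neg_right, inner_sub_right, inner_sub_left, real_inner_comm B A]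
    ring
  have e3 : ⟪r, γ • r⟫ = γ * ⟪r, r⟫ := real_inner_smul_right r r γ
  have e4 : ⟪A, A⟫ = ‖A‖ ^ 2 := real_inner_self_eq_norm_sq A
  have e5 : ⟪B - A, B - A⟫ = ‖B - A‖ ^ 2 := real_inner_self_eq_norm_sq (B - A)
  have e6 : ⟪r, r⟫ = ‖r‖ ^ 2 := real_inner_self_eq_norm_sq r
  have hip : -(‖A‖ * ‖B - A‖) ≤ ⟪A, B - A⟫ :=
    neg_le_of_abs_le (abs_real_inner_le_norm A (B - A))
  rw [e1, e2, e3, e4, e5, e6]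
  nlinarith [sq_nonneg (2 * ‖A‖ - ‖B - A‖), sq_nonneg ‖r‖,
    mul_nonneg (sub_nonneg.2 hγ) (sq_nonneg ‖r‖), norm_nonneg (B - A), norm_nonneg A]
end

section
/- Under the setting of the minimax Lyapunov descent (W(x,y) = F(x) + (1/2)(F(x) − f(x,y)), flow ẋ = −∇_x f(x,y), ẏ = γ∇_y f(x,y), f(x,·) μ-strongly concave, ∇_x f L_{xy}-Lipschitz in y, F bounded below by F_inf), if γ > (5/4)(L_{xy}/μ)², then for t uniform on [0,T], E_t[‖y(t) − y*(x(t))‖²] ≤ (W(x(0),y(0)) − F_inf)/(μ² c_y(γ) T), where c_y(γ) := γ/2 − (5/8)(L_{xy}/μ)². -/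
open MeasureTheory Set
open scoped RealInnerProductSpace

/-!
Along the flow, `W = F + (F - f)/2` decreases at rate at least `‖∇F‖²/2 + c_y(γ) ‖∇_y f‖²`:
writing `∇_x f = ∇F + e` with `‖e‖ ≤ L_{xy} ‖y - y*(x)‖ ≤ (L_{xy}/μ) ‖∇_y f‖`, the `x`-part of
`-Ẇ` is `‖∇F‖² + ⟪∇F, e⟫/2 - ‖e‖²/2 ≥ ‖∇F‖²/2 - 5‖e‖²/8`. Integrating over `[0, T]`, using
`W ≥ F ≥ F_inf` (as `y*(x)` maximises `f(x, ·)`) and `μ ‖y - y*(x)‖ ≤ ‖∇_y f‖` gives the bound.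
-/

noncomputable def minimaxLyapunov {X Y : Type*} (F : X → ℝ) (f : X → Y → ℝ) (x : X) (y : Y) : ℝ :=
  F x + 1 / 2 * (F x - f x y)

noncomputable def trackingRate (μ Lxy γ : ℝ) : ℝ :=
  γ / 2 - 5 / 8 * (Lxy / μ) ^ 2

section StrongConcavity

variable {Y : Type*} [NormedAddCommGroup Y] [InnerProductSpace ℝ Y]
  {g : Y → ℝ} {G : Y → Y} {μ : ℝ} {y₀ : Y}

theorem le_of_strongConcave_of_grad_eq_zero (hμ : 0 ≤ μ)
    (hg : ∀ y y', g y' ≤ g y + ⟪G y, y' - y⟫ - μ / 2 * ‖y' - y‖ ^ 2) (h₀ : G y₀ = 0) (y : Y) :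
    g y ≤ g y₀ := by
  have h := hg y₀ y
  rw [h₀, inner_zero_left] at h
  nlinarith [sq_nonneg ‖y - y₀‖]

theorem mul_norm_sub_le_norm_grad_of_strongConcave
    (hg : ∀ y y', g y' ≤ g y + ⟪G y, y' - y⟫ - μ / 2 * ‖y' - y‖ ^ 2) (h₀ : G y₀ = 0) (y : Y) :
    μ * ‖y - y₀‖ ≤ ‖G y‖ := by
  have h₁ := hg y y₀
  have h₂ := hg y₀ y
  rw [h₀, inner_zero_left] at h₂
  rw [norm_sub_rev y₀ y] at h₁
  have hCS : ⟪G y, y₀ - y⟫ ≤ ‖G y‖ * ‖y - y₀‖ := by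
    simpa only [norm_sub_rev y₀ y] using real_inner_le_norm (G y) (y₀ - y)
  have hsq : μ * ‖y - y₀‖ * ‖y - y₀‖ ≤ ‖G y‖ * ‖y - y₀‖ := by nlinarith
  rcases (norm_nonneg (y - y₀)).eq_or_lt with hzero | hpos
  · simp [← hzero]
  · exact le_of_mul_le_mul_right hsq hpos

end StrongConcavity

theorem half_norm_sq_sub_le_inner_sub_half_norm_sq {X : Type*} [NormedAddCommGroup X]
    [InnerProductSpace ℝ X] (g u : X) :
    1 / 2 * ‖g‖ ^ 2 - 5 / 8 * ‖u - g‖ ^ 2 ≤ 3 / 2 * ⟪g, u⟫ - 1 / 2 * ‖u‖ ^ 2 := by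
  have hu : u = g + (u - g) := by abel
  have hCS : -(‖g‖ * ‖u - g‖) ≤ ⟪g, u - g⟫ := neg_le_of_abs_le (abs_real_inner_le_norm _ _)
  rw [hu, inner_add_right, real_inner_self_eq_norm_sq, norm_add_sq_real, ← hu]
  nlinarith [sq_nonneg (‖g‖ - ‖u - g‖ / 2)]

theorem hasDerivAt_minimaxLyapunov {X Y : Type*} [NormedAddCommGroup X] [InnerProductSpace ℝ X]
    [CompleteSpace X] {F : X → ℝ} {f : X → Y → ℝ} {gradF : X} {x : ℝ → X} {y : ℝ → Y}
    {x' : X} {φ : ℝ} {t : ℝ} (hF : HasGradientAt F gradF (x t)) (hx : HasDerivAt x x' t)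
    (hf : HasDerivAt (fun s => f (x s) (y s)) φ t) :
    HasDerivAt (fun s => minimaxLyapunov F f (x s) (y s))
      (⟪gradF, x'⟫ + 1 / 2 * (⟪gradF, x'⟫ - φ)) t := by
  have hFx : HasDerivAt (fun s => F (x s)) ⟪gradF, x'⟫ t := by
    simpa [InnerProductSpace.toDual_apply_apply, Function.comp_def] using
      hF.hasFDerivAt.comp_hasDerivAt t hx
  exact hFx.add ((hFx.sub hf).const_mul _)

/-- With `g = ∇F(x)`, `u = ∇_x f(x, y)`, `v = ∇_y f(x, y)` and `D = ‖y - y*(x)‖`, the left side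
is `Ẇ` along the flow. -/
theorem minimaxLyapunov_dissipation {X Y : Type*} [NormedAddCommGroup X] [InnerProductSpace ℝ X]
    [NormedAddCommGroup Y] [InnerProductSpace ℝ Y] (g u : X) (v : Y) {μ Lxy γ D : ℝ}
    (hμ : 0 < μ) (hD : 0 ≤ D) (hu : ‖u - g‖ ≤ Lxy * D) (hv : μ * D ≤ ‖v‖) :
    ⟪g, -u⟫ + 1 / 2 * (⟪g, -u⟫ - (⟪u, -u⟫ + ⟪v, γ • v⟫))
      ≤ -(1 / 2 * ‖g‖ ^ 2) - trackingRate μ Lxy γ * ‖v‖ ^ 2 := by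
  have hx := half_norm_sq_sub_le_inner_sub_half_norm_sq g u
  have hu2 : ‖u - g‖ ^ 2 ≤ (Lxy * D) ^ 2 := pow_le_pow_left₀ (norm_nonneg _) hu 2
  have hv2 : (μ * D) ^ 2 ≤ ‖v‖ ^ 2 := pow_le_pow_left₀ (by positivity) hv 2
  have hLD : (Lxy * D) ^ 2 ≤ (Lxy / μ) ^ 2 * ‖v‖ ^ 2 := by
    calc (Lxy * D) ^ 2 = (Lxy / μ) ^ 2 * (μ * D) ^ 2 := by field_simp
      _ ≤ (Lxy / μ) ^ 2 * ‖v‖ ^ 2 := by gcongr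
  rw [inner_neg_right, inner_neg_right, real_inner_self_eq_norm_sq, real_inner_smul_right,
    real_inner_self_eq_norm_sq]
  unfold trackingRate
  nlinarith

theorem integral_le_sub_of_hasDerivAt_of_le_neg {W W' φ : ℝ → ℝ} {a b : ℝ} (hab : a ≤ b)
    (hW : ∀ t ∈ Icc a b, HasDerivAt W (W' t) t) (hφ : IntervalIntegrable φ volume a b)
    (hle : ∀ t ∈ Ioo a b, φ t ≤ -W' t) :
    ∫ t in a..b, φ t ≤ W a - W b := by
  have h := intervalIntegral.integral_le_sub_of_hasDeriv_right_of_le hab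
    (fun t ht => (hW t ht).neg.continuousAt.continuousWithinAt)
    (fun t ht => (hW t (Ioo_subset_Icc_self ht)).neg.hasDerivWithinAt)
    ((intervalIntegrable_iff_integrableOn_Icc_of_le hab).1 hφ) hle
  simpa only [Pi.neg_apply, neg_sub_neg] using h

theorem minimax_ergodic_tracking_general
    {X Y : Type*} [NormedAddCommGroup X] [InnerProductSpace ℝ X] [CompleteSpace X]
    [NormedAddCommGroup Y] [InnerProductSpace ℝ Y]
    (f : X → Y → ℝ) (Gxf : X → Y → X) (Gyf : X → Y → Y)
    (F : X → ℝ) (gradF : X → X) (ystar : X → Y)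
    (μ Lxy γ Finf T : ℝ) (hμ : 0 < μ) (hT : 0 < T)
    (hconc : ∀ (x : X) (y y' : Y),
      f x y' ≤ f x y + ⟪Gyf x y, y' - y⟫ - μ / 2 * ‖y' - y‖ ^ 2)
    (hLip : ∀ (x : X) (y y' : Y), ‖Gxf x y - Gxf x y'‖ ≤ Lxy * ‖y - y'‖)
    (hystar : ∀ x : X, Gyf x (ystar x) = 0)
    (hF : ∀ x : X, F x = f x (ystar x))
    (hgradF : ∀ x : X, HasGradientAt F (gradF x) x)
    (hgradF_eq : ∀ x : X, gradF x = Gxf x (ystar x))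
    (hFinf : ∀ x : X, Finf ≤ F x)
    (xt : ℝ → X) (yt : ℝ → Y)
    (hxd : ∀ t : ℝ, HasDerivAt xt (-(Gxf (xt t) (yt t))) t)
    (hfchain : ∀ t : ℝ, HasDerivAt (fun s => f (xt s) (yt s))
      (⟪Gxf (xt t) (yt t), -(Gxf (xt t) (yt t))⟫
        + ⟪Gyf (xt t) (yt t), γ • Gyf (xt t) (yt t)⟫) t)
    (hInt : IntervalIntegrable (fun t => ‖yt t - ystar (xt t)‖ ^ 2) volume 0 T)
    (hγ : γ > 5 / 4 * (Lxy / μ) ^ 2) :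
    (1 / T) * ∫ t in (0:ℝ)..T, ‖yt t - ystar (xt t)‖ ^ 2
      ≤ ((F (xt 0) + 1 / 2 * (F (xt 0) - f (xt 0) (yt 0))) - Finf)
        / (μ ^ 2 * (γ / 2 - 5 / 8 * (Lxy / μ) ^ 2) * T) := by
  set c := trackingRate μ Lxy γ
  have hc : 0 < c := by simp only [c, trackingRate]; linarith
  have hdecay : ∫ t in (0:ℝ)..T, c * μ ^ 2 * ‖yt t - ystar (xt t)‖ ^ 2
      ≤ minimaxLyapunov F f (xt 0) (yt 0) - minimaxLyapunov F f (xt T) (yt T) := by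
    refine integral_le_sub_of_hasDerivAt_of_le_neg hT.le
      (fun t _ => hasDerivAt_minimaxLyapunov (hgradF _) (hxd t) (hfchain t))
      (hInt.const_mul _) fun t _ => ?_
    have htrack := mul_norm_sub_le_norm_grad_of_strongConcave (hconc (xt t)) (hystar _) (yt t)
    have hLip' : ‖Gxf (xt t) (yt t) - gradF (xt t)‖ ≤ Lxy * ‖yt t - ystar (xt t)‖ :=
      hgradF_eq (xt t) ▸ hLip _ _ _
    have hdiss := minimaxLyapunov_dissipation (γ := γ) _ _ _ hμ (norm_nonneg _) hLip' htrack
    have hsq : c * (μ * ‖yt t - ystar (xt t)‖) ^ 2 ≤ c * ‖Gyf (xt t) (yt t)‖ ^ 2 := by gcongr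
    nlinarith
  have hWT : Finf ≤ minimaxLyapunov F f (xt T) (yt T) := by
    have hmax := le_of_strongConcave_of_grad_eq_zero hμ.le (hconc (xt T)) (hystar _) (yt T)
    simp only [minimaxLyapunov, hF (xt T)] at hmax ⊢
    linarith [hF (xt T) ▸ hFinf (xt T)]
  rw [intervalIntegral.integral_const_mul] at hdecay
  rw [le_div_iff₀ (by positivity)]
  calc 1 / T * (∫ t in (0:ℝ)..T, ‖yt t - ystar (xt t)‖ ^ 2) * (μ ^ 2 * c * T)
      = c * μ ^ 2 * ∫ t in (0:ℝ)..T, ‖yt t - ystar (xt t)‖ ^ 2 := by field_simp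
    _ ≤ minimaxLyapunov F f (xt 0) (yt 0) - Finf := by linarith

/-- Minimax ergodic tracking (Corollary 4.2): under the minimax Lyapunov setting
with `F` bounded below by `F_inf` and `γ > (5/4)(L_{xy}/μ)²`, the time-average of
the tracking error satisfies
`(1/T)∫₀ᵀ ‖y(t) − y*(x(t))‖² dt ≤ (W(x(0),y(0)) − F_inf)/(μ² c_y(γ) T)`,
where `c_y(γ) = γ/2 − (5/8)(L_{xy}/μ)²`. -/
theorem minimax_ergodic_tracking
    {X Y : Type*} [NormedAddCommGroup X] [InnerProductSpace ℝ X] [CompleteSpace X]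
    [NormedAddCommGroup Y] [InnerProductSpace ℝ Y]
    (f : X → Y → ℝ) (Gxf : X → Y → X) (Gyf : X → Y → Y)
    (F : X → ℝ) (gradF : X → X) (ystar : X → Y)
    (μ Lxy γ Finf T : ℝ) (hμ : 0 < μ) (hT : 0 < T)
    (hconc : ∀ (x : X) (y y' : Y),
      f x y' ≤ f x y + ⟪Gyf x y, y' - y⟫ - μ / 2 * ‖y' - y‖ ^ 2)
    (hLip : ∀ (x : X) (y y' : Y), ‖Gxf x y - Gxf x y'‖ ≤ Lxy * ‖y - y'‖)
    (hystar : ∀ x : X, Gyf x (ystar x) = 0)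
    (hF : ∀ x : X, F x = f x (ystar x))
    (hgradF : ∀ x : X, HasGradientAt F (gradF x) x)
    (hgradF_eq : ∀ x : X, gradF x = Gxf x (ystar x))
    (hFinf : ∀ x : X, Finf ≤ F x)
    (xt : ℝ → X) (yt : ℝ → Y)
    (hxd : ∀ t : ℝ, HasDerivAt xt (-(Gxf (xt t) (yt t))) t)
    (hyd : ∀ t : ℝ, HasDerivAt yt (γ • Gyf (xt t) (yt t)) t)
    (hfchain : ∀ t : ℝ, HasDerivAt (fun s => f (xt s) (yt s))
      (⟪Gxf (xt t) (yt t), -(Gxf (xt t) (yt t))⟫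
        + ⟪Gyf (xt t) (yt t), γ • Gyf (xt t) (yt t)⟫) t)
    (hInt : IntervalIntegrable (fun t => ‖yt t - ystar (xt t)‖ ^ 2) volume 0 T)
    (hγ : γ > 5 / 4 * (Lxy / μ) ^ 2) :
    (1 / T) * ∫ t in (0:ℝ)..T, ‖yt t - ystar (xt t)‖ ^ 2
      ≤ ((F (xt 0) + 1 / 2 * (F (xt 0) - f (xt 0) (yt 0))) - Finf)
        / (μ ^ 2 * (γ / 2 - 5 / 8 * (Lxy / μ) ^ 2) * T) :=
  minimax_ergodic_tracking_general f Gxf Gyf F gradF ystar μ Lxy γ Finf T hμ hT hconc hLip hystar hF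
    hgradF hgradF_eq hFinf xt yt hxd hfchain hInt hγ
end

section
/- Let g(x,·) be μ-strongly convex with minimizer y*(x) and f be such that ∇_y f(x,·) is L_{fy}-Lipschitz. Let y_λ*(x) minimize f(x,·) + λ g(x,·), so ∇_y f(x,y_λ*) + λ∇_y g(x,y_λ*) = 0. Then for every λ ≥ 2L_{fy}/μ, ‖y_λ*(x) − y*(x)‖ ≤ (2/(μλ))‖∇_y f(x,y*(x))‖ and ‖∇_y f(x,y_λ*(x))‖ ≤ 2‖∇_y f(x,y*(x))‖. -/
open scoped RealInnerProductSpace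

/-- Penalty bias bounds (from Lemma `lem:bridge`): with `g(x,·)` `μ`-strongly convex
(minimizer `y*(x)`), `∇_y f(x,·)` `L_{fy}`-Lipschitz, and `y_λ*(x)` the minimizer of
`f(x,·) + λ g(x,·)`, for every `λ ≥ 2L_{fy}/μ` one has
`‖y_λ*(x) − y*(x)‖ ≤ (2/(μλ))‖∇_y f(x,y*(x))‖` and
`‖∇_y f(x,y_λ*(x))‖ ≤ 2‖∇_y f(x,y*(x))‖`. -/
theorem penalty_minimizer_bias
    {X Y : Type*} [NormedAddCommGroup Y] [InnerProductSpace ℝ Y]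
    (f g : X → Y → ℝ) (Gyf Gyg : X → Y → Y) (ystar ylam : X → Y)
    (μ Lfy lam : ℝ) (hμ : 0 < μ) (hlam : 0 < lam)
    -- μ-strong convexity of g(x,·)
    (hscg : ∀ (x : X) (u v : Y),
      g x v ≥ g x u + ⟪Gyg x u, v - u⟫ + μ / 2 * ‖v - u‖ ^ 2)
    -- y*(x) minimizes g(x,·)
    (hystar : ∀ x : X, Gyg x (ystar x) = 0)
    -- ∇_y f(x,·) is L_{fy}-Lipschitz
    (hLip : ∀ (x : X) (u v : Y), ‖Gyf x u - Gyf x v‖ ≤ Lfy * ‖u - v‖)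
    -- y_λ*(x) minimizes f(x,·) + λ g(x,·): first-order condition
    (hylam : ∀ x : X, Gyf x (ylam x) + lam • Gyg x (ylam x) = 0)
    (hlam2 : lam ≥ 2 * Lfy / μ) :
    ∀ x : X,
      ‖ylam x - ystar x‖ ≤ 2 / (μ * lam) * ‖Gyf x (ystar x)‖ ∧
      ‖Gyf x (ylam x)‖ ≤ 2 * ‖Gyf x (ystar x)‖ := by
  intro x
  set d : Y := ylam x - ystar x with hd
  set A : ℝ := ‖Gyf x (ylam x)‖ with hA
  set B : ℝ := ‖Gyf x (ystar x)‖ with hB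
  have h1 := hscg x (ylam x) (ystar x)
  have h2 := hscg x (ystar x) (ylam x)
  rw [hystar x] at h2
  have hz : ⟪(0 : Y), ylam x - ystar x⟫ = 0 := inner_zero_left _
  have hnorm : ‖ystar x - ylam x‖ = ‖d‖ := by rw [hd, norm_sub_rev]
  have hkey : ⟪Gyg x (ylam x), ystar x - ylam x⟫ = -⟪Gyg x (ylam x), d⟫ := by
    rw [hd, ← neg_sub (ylam x) (ystar x), inner_neg_right]
  have hmono : μ * ‖d‖ ^ 2 ≤ ⟪Gyg x (ylam x), d⟫ := by
    have e1 : ‖ylam x - ystar x‖ = ‖d‖ := rfl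
    rw [e1, hz] at h2
    rw [hnorm, hkey] at h1
    linarith
  have hcs : ⟪-Gyf x (ylam x), d⟫ ≤ A * ‖d‖ := by
    have := real_inner_le_norm (-Gyf x (ylam x)) d
    rwa [norm_neg] at this
  have heq : lam • Gyg x (ylam x) = -Gyf x (ylam x) := by
    have := hylam x; linear_combination (norm := abel) this
  have hsm : ⟪-Gyf x (ylam x), d⟫ = lam * ⟪Gyg x (ylam x), d⟫ := by
    rw [← heq, real_inner_smul_left]
  have hmain : μ * lam * ‖d‖ ^ 2 ≤ A * ‖d‖ := by
    nlinarith [hmono, hcs, hsm, norm_nonneg d]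
  have hL : ‖Gyf x (ylam x) - Gyf x (ystar x)‖ ≤ Lfy * ‖d‖ := hLip x (ylam x) (ystar x)
  have hAB : A ≤ B + Lfy * ‖d‖ := by
    have := norm_sub_norm_le (Gyf x (ylam x)) (Gyf x (ystar x))
    linarith
  have hLfy : 2 * Lfy ≤ μ * lam := by
    rw [ge_iff_le, div_le_iff₀ hμ] at hlam2; linarith
  have hdnn : (0 : ℝ) ≤ ‖d‖ := norm_nonneg d
  have hBnn : (0 : ℝ) ≤ B := norm_nonneg _
  have hml : 0 < μ * lam := mul_pos hμ hlam
  have hhalf : μ * lam / 2 * ‖d‖ ≤ B := by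
    rcases eq_or_lt_of_le hdnn with h0 | h0
    · nlinarith
    · nlinarith [mul_le_mul_of_nonneg_right hLfy hdnn]
  constructor
  · rw [div_mul_eq_mul_div, le_div_iff₀ hml]
    nlinarith
  · nlinarith [mul_le_mul_of_nonneg_right hLfy hdnn]
end
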